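/- Let s be a partition having a slippery plateau of length l at 1 (l ≥ 2) and a non-slippery step at l, i.e., there is m ≥ l+1 with s_l − 1 = s_{l+1} = ⋯ = s_m ≥ s_{m+1}+2. Then dirreach(s^{↓(l+1)}) = dirreach(s)^{↓(l+1)}. -/

import Mathlib

/-!
Partitions are modelled as functions `s : ℕ → ℕ` (0-based: `s 0` is the first
part `s_1`), nonincreasing and eventually zero.  A paper index `i ≥ 1`
(columns, transitions `→_i`, increments `s^{↓i}`) corresponds to the Lean
index `i - 1`.
-/

/-- `s` is a partition: nonincreasing and eventually zero. -/
def IsPartition (s : ℕ → ℕ) : Prop :=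
  (∀ i, s (i + 1) ≤ s i) ∧ ∃ N, ∀ i, N ≤ i → s i = 0

/-- `j`-th suffix sum (0-based: `suff s 0` is the total sum `|s|`,
`suff s (j-1)` is the paper's `Σ_j`). -/
noncomputable def suff (s : ℕ → ℕ) (j : ℕ) : ℕ := ∑' i, s (j + i)

/-- `s` is a partition of `n`. -/
noncomputable def IsPartOf (n : ℕ) (s : ℕ → ℕ) : Prop := IsPartition s ∧ suff s 0 = n

/-- Prefix sum of the first `j` parts. -/
def psum (s : ℕ → ℕ) (j : ℕ) : ℕ := ∑ i ∈ Finset.range j, s i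

/-- Dominance ordering: `Dom s t` means `s ≥ t`, i.e. every prefix sum of `s`
is at least the corresponding prefix sum of `t`. -/
def Dom (s t : ℕ → ℕ) : Prop := ∀ j, psum t j ≤ psum s j

/-- `s^{↓(i+1)}`: add one grain on the (0-based) `i`-th column. -/
def incr (s : ℕ → ℕ) (i : ℕ) : ℕ → ℕ := Function.update s i (s i + 1)

/-- Move one grain from column `a` to column `b` (0-based). -/
def moveGrain (s : ℕ → ℕ) (a b : ℕ) : ℕ → ℕ :=
  fun j => if j = a then s a - 1 else if j = b then s b + 1 else s j

/-- `s` has a cliff at (0-based) column `i`: `s_i ≥ s_{i+1} + 2`. -/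
def Cliff (s : ℕ → ℕ) (i : ℕ) : Prop := s (i + 1) + 2 ≤ s i

/-- `s` has a slippery step at (0-based) column `i`, the plateau ending at
(0-based) column `m`:  `s_i - 1 = s_{i+1} = ⋯ = s_m = s_{m+1} + 1` (in 0-based
indices), with `m ≥ i + 1`. -/
def SlipAt (s : ℕ → ℕ) (i m : ℕ) : Prop :=
  i + 1 ≤ m ∧ (∀ j, i + 1 ≤ j → j ≤ m → s j + 1 = s i) ∧ s (m + 1) + 2 = s i

/-- The transition `s →_{i+1} t` of the paper (0-based `i`): a fall from a
cliff at `i`, or a slip from a slippery step at `i` (the grain landing just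
after the plateau). -/
def Step (s : ℕ → ℕ) (i : ℕ) (t : ℕ → ℕ) : Prop :=
  (Cliff s i ∧ t = moveGrain s i (i + 1)) ∨
  (∃ m, SlipAt s i m ∧ t = moveGrain s i (m + 1))

/-- The set of configurations directly reachable from `s`. -/
def dirreach (s : ℕ → ℕ) : Set (ℕ → ℕ) := {t | ∃ i, Step s i t}

/-- `s` has a (slippery, if `l ≥ 2`) plateau of length `l` at `1`:
`s_1 = s_2 = ⋯ = s_l = s_{l+1} + 1`. -/
def SlipperyPlateau1 (s : ℕ → ℕ) (l : ℕ) : Prop :=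
  (∀ j, j < l → s j = s 0) ∧ s l + 1 = s 0

/-- `s` has a non-slippery plateau at `1`:
`s_1 = ⋯ = s_l ≥ s_{l+1} + 2` for some `l ≥ 2`. -/
def NonSlipperyPlateau1 (s : ℕ → ℕ) : Prop :=
  ∃ l, 2 ≤ l ∧ (∀ j, j < l → s j = s 0) ∧ s l + 2 ≤ s 0

/-- `s` has a slippery step at `1`. -/
def SlipperyStep1 (s : ℕ → ℕ) : Prop := ∃ m, SlipAt s 0 m

/-- `s` has a non-slippery step at `1`: `s_1 = s_2 + 1` and
`s_2 = ⋯ = s_m ≥ s_{m+1} + 2` for some `m ≥ 2` (here `m` is 0-based, `≥ 1`). -/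
def NonSlipperyStep1 (s : ℕ → ℕ) : Prop :=
  s 0 = s 1 + 1 ∧ ∃ m, 1 ≤ m ∧ (∀ j, 1 ≤ j → j ≤ m → s j = s 1) ∧ s (m + 1) + 2 ≤ s 1

/-- `c` is the infimum of `a` and `b` in the dominance lattice `L_B(n)`. -/
noncomputable def IsInfOn (n : ℕ) (a b c : ℕ → ℕ) : Prop :=
  IsPartOf n c ∧ Dom a c ∧ Dom b c ∧ ∀ d, IsPartOf n d → Dom a d → Dom b d → Dom c d

/-- `c` is the supremum of `a` and `b` in the dominance lattice `L_B(n)`. -/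
noncomputable def IsSupOn (n : ℕ) (a b c : ℕ → ℕ) : Prop :=
  IsPartOf n c ∧ Dom c a ∧ Dom c b ∧ ∀ d, IsPartOf n d → Dom d a → Dom d b → Dom d c

/-- The order `≥_∞` on the set `P` of all partitions: `GeInf s t` means
`s ≥_∞ t`, i.e. every suffix sum of `s` is at most that of `t`. -/
noncomputable def GeInf (s t : ℕ → ℕ) : Prop := ∀ j, suff s j ≤ suff t j

/-- `c` is the infimum of `a` and `b` in `(P, ≥_∞)`. -/
noncomputable def IsInfP (a b c : ℕ → ℕ) : Prop :=
  IsPartition c ∧ GeInf a c ∧ GeInf b c ∧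
    ∀ d, IsPartition d → GeInf a d → GeInf b d → GeInf c d

/-- `c` is the supremum of `a` and `b` in `(P, ≥_∞)`. -/
noncomputable def IsSupP (a b c : ℕ → ℕ) : Prop :=
  IsPartition c ∧ GeInf c a ∧ GeInf c b ∧
    ∀ d, IsPartition d → GeInf d a → GeInf d b → GeInf d c

/-- The map `π`: delete the first part, `(s_1, s_2, …) ↦ (s_2, …)`. -/
def shift (s : ℕ → ℕ) : ℕ → ℕ := fun i => s (i + 1)

/-!
Write `h = s₁` and `t = s^{↓(l+1)}`. Up to column `m` (0-based) both `s` and `t` take only the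
values `h` and `h - 1`, and both have a cliff at `m`, so neither has a transition before `m`: a
slip from there would have to run down the near-flat stretch and end at the cliff, which a
slippery step cannot do. At `m` the only transition is the fall, and beyond `m` the two
configurations agree; on both stretches the extra grain on column `l` just rides along.
-/

section Transitions

variable {s t : ℕ → ℕ} {i k m : ℕ}

lemma incr_apply (s : ℕ → ℕ) (k j : ℕ) : incr s k j = if j = k then s k + 1 else s j := by
  simp only [incr, Function.update_apply]

lemma moveGrain_incr {a b : ℕ} (hb : b ≠ k) (ha : 0 < s a) :
    moveGrain (incr s k) a b = incr (moveGrain s a b) k := by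
  funext j
  simp only [moveGrain, incr_apply]
  split_ifs <;> subst_vars <;> omega

lemma cliff_congr (h : ∀ j, i ≤ j → s j = t j) : Cliff s i ↔ Cliff t i := by
  simp only [Cliff, h i le_rfl, h (i + 1) (by omega)]

lemma slipAt_congr (h : ∀ j, i ≤ j → s j = t j) : SlipAt s i m ↔ SlipAt t i m := by
  unfold SlipAt
  refine and_congr_right fun him => ?_
  rw [h i le_rfl, h (m + 1) (by omega)]
  refine and_congr_left fun _ => forall_congr' fun j => forall_congr' fun hj => ?_
  rw [h j (by omega)]

lemma cliff_incr (hk : k ≤ i) (hc : Cliff s i) : Cliff (incr s k) i := by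
  unfold Cliff at *
  simp only [incr_apply]
  split_ifs <;> subst_vars <;> omega

lemma step_iff_of_cliff (hc : Cliff s i) {v : ℕ → ℕ} :
    Step s i v ↔ v = moveGrain s i (i + 1) := by
  refine ⟨?_, fun hv => Or.inl ⟨hc, hv⟩⟩
  rintro (⟨-, hv⟩ | ⟨m, ⟨him, hplat, -⟩, -⟩)
  · exact hv
  · have := hplat (i + 1) le_rfl him
    unfold Cliff at hc
    omega

lemma not_step_of_flat_of_cliff {h : ℕ} (hflat : ∀ j, i ≤ j → j ≤ m → s j ≤ h ∧ h ≤ s j + 1)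
    (hc : Cliff s m) (him : i < m) {v : ℕ → ℕ} : ¬ Step s i v := by
  unfold Cliff at hc
  have hi := hflat i le_rfl him.le
  rintro (⟨hci, -⟩ | ⟨m', ⟨hm', hplat, hend⟩, -⟩)
  · have := hflat (i + 1) (by omega) (by omega)
    unfold Cliff at hci
    omega
  · rcases lt_trichotomy m' m with hlt | rfl | hgt
    · have := hflat (m' + 1) (by omega) (by omega)
      omega
    · have := hplat m' hm' le_rfl
      omega
    · have := hplat m (by omega) hgt.le
      have := hplat (m + 1) (by omega) hgt
      omega

lemma step_incr_iff_of_cliff (hk : k ≤ i) (hc : Cliff s i) {u : ℕ → ℕ} :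
    Step (incr s k) i u ↔ ∃ v, Step s i v ∧ u = incr v k := by
  have hpos : 0 < s i := by unfold Cliff at hc; omega
  simp only [step_iff_of_cliff (cliff_incr hk hc), step_iff_of_cliff hc, exists_eq_left,
    moveGrain_incr (by omega : i + 1 ≠ k) hpos]

lemma step_incr_iff_of_lt (hk : k < i) {u : ℕ → ℕ} :
    Step (incr s k) i u ↔ ∃ v, Step s i v ∧ u = incr v k := by
  have htail : ∀ j, i ≤ j → incr s k j = s j := fun j hj => by
    rw [incr_apply, if_neg (by omega)]
  constructor
  · rintro (⟨hc, rfl⟩ | ⟨m, hm, rfl⟩)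
    · rw [cliff_congr htail] at hc
      have : 0 < s i := by unfold Cliff at hc; omega
      exact ⟨_, Or.inl ⟨hc, rfl⟩, moveGrain_incr (by omega) this⟩
    · rw [slipAt_congr htail] at hm
      have : 0 < s i := by have := hm.2.2; omega
      exact ⟨_, Or.inr ⟨m, hm, rfl⟩, moveGrain_incr (by have := hm.1; omega) this⟩
  · rintro ⟨v, ⟨hc, rfl⟩ | ⟨m, hm, rfl⟩, rfl⟩
    · have : 0 < s i := by unfold Cliff at hc; omega
      rw [← moveGrain_incr (by omega) this]
      exact Or.inl ⟨(cliff_congr htail).2 hc, rfl⟩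
    · have : 0 < s i := by have := hm.2.2; omega
      rw [← moveGrain_incr (by have := hm.1; omega) this]
      exact Or.inr ⟨m, (slipAt_congr htail).2 hm, rfl⟩

lemma dirreach_eq_image_of_step_iff {f : (ℕ → ℕ) → ℕ → ℕ}
    (h : ∀ i u, Step t i u ↔ ∃ v, Step s i v ∧ u = f v) : dirreach t = f '' dirreach s := by
  ext u
  simp only [dirreach, Set.mem_ofPred_eq, Set.mem_image, h]
  constructor
  · rintro ⟨i, v, hv, rfl⟩
    exact ⟨v, ⟨i, hv⟩, rfl⟩
  · rintro ⟨v, ⟨i, hv⟩, rfl⟩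
    exact ⟨i, v, hv, rfl⟩

end Transitions

theorem stmt10_general (s : ℕ → ℕ) (l : ℕ)
    (hp : SlipperyPlateau1 s l)
    (hns : ∃ m, l ≤ m ∧ (∀ j, l ≤ j → j ≤ m → s j + 1 = s (l - 1)) ∧
      s (m + 1) + 2 ≤ s m) :
    dirreach (incr s l) = (fun v => incr v l) '' dirreach s := by
  obtain ⟨hplat, hsl⟩ := hp
  obtain ⟨m, hlm, hstep, hcliff⟩ := hns
  have hl : 0 < l := Nat.pos_of_ne_zero (by rintro rfl; omega)
  have hl1 : s (l - 1) = s 0 := hplat _ (by omega)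
  have hflat : ∀ j, j ≤ m → s j ≤ s 0 ∧ s 0 ≤ s j + 1 := fun j hjm => by
    by_cases hjl : j < l
    · rw [hplat j hjl]; omega
    · have := hstep j (by omega) hjm; omega
  have hflat_incr : ∀ j, j ≤ m → incr s l j ≤ s 0 ∧ s 0 ≤ incr s l j + 1 :=
    fun j hjm => by
      have := hflat j hjm
      rw [incr_apply]; split_ifs <;> omega
  refine dirreach_eq_image_of_step_iff fun i u => ?_
  rcases lt_trichotomy i m with him | rfl | him
  · exact iff_of_false (not_step_of_flat_of_cliff (fun j _ => hflat_incr j)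
      (cliff_incr hlm hcliff) him)
      fun ⟨v, hv, _⟩ => not_step_of_flat_of_cliff (fun j _ => hflat j) hcliff him hv
  · exact step_incr_iff_of_cliff hlm hcliff
  · exact step_incr_iff_of_lt (by omega)

/-- If `s` has a slippery plateau of length `l ≥ 2` at `1`
and a non-slippery step at `l` (there is `m ≥ l+1` with
`s_l − 1 = s_{l+1} = ⋯ = s_m ≥ s_{m+1} + 2`, stated here in 0-based indices),
then `dirreach(s^{↓(l+1)}) = dirreach(s)^{↓(l+1)}`. -/
theorem stmt10 (s : ℕ → ℕ) (l : ℕ) (hs : IsPartition s) (hl : 2 ≤ l)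
    (hp : SlipperyPlateau1 s l)
    (hns : ∃ m, l ≤ m ∧ (∀ j, l ≤ j → j ≤ m → s j + 1 = s (l - 1)) ∧
      s (m + 1) + 2 ≤ s m) :
    dirreach (incr s l) = (fun v => incr v l) '' dirreach s :=
  stmt10_general s l hp hns
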